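/- Let $M\in M_8(\mathbb{C})$ be a Hermitian matrix satisfying all of: (a) $M$ anticommutes with the two Dirac kinetic matrices $\sigma_0\otimes\tau_y\otimes\mu_0$ and $\sigma_0\otimes\tau_z\otimes\mu_z$ (so $M$ is a mass term gapping both Dirac cones); (b) $M$ commutes with $\sigma_0\otimes\tau_0\otimes\mu_z$ and with $\sigma_0\otimes\tau_y\otimes\mu_x$ (invariance under the magnetic translations $R_{\tilde T_y}=i\mu_z$ and $R_{\tilde T_x}=i\tau_y\mu_x$); (c) $(\sigma_y\otimes\tau_0\otimes\mu_x)\,\overline{M}\,(\sigma_y\otimes\tau_0\otimes\mu_x) = M$ (time-reversal invariance under $\mathcal T = i\sigma_y\mu_x K$). Then $M$ is a real linear combination of the three quantum spin Hall mass matrices $\sigma_x\otimes\tau_x\otimes\mu_z$, $\sigma_y\otimes\tau_x\otimes\mu_z$, $\sigma_z\otimes\tau_x\otimes\mu_z$. Conversely, each of these three matrices is Hermitian and satisfies (a), (b), (c). In other words, the only mass terms for the $\pi$-flux Dirac Hamiltonian allowed by time reversal and magnetic translation symmetry are the three QSH masses $\vec\sigma\,\tau_x\mu_z$. -/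
import Mathlib


open Matrix Kronecker

/-- Pauli matrices (and identity) as `2×2` complex matrices. -/
def pauli0 : Matrix (Fin 2) (Fin 2) ℂ := 1
def pauliX : Matrix (Fin 2) (Fin 2) ℂ := !![0, 1; 1, 0]
def pauliY : Matrix (Fin 2) (Fin 2) ℂ := !![0, -Complex.I; Complex.I, 0]
def pauliZ : Matrix (Fin 2) (Fin 2) ℂ := !![1, 0; 0, -1]

/-- The `8×8` matrix algebra: spin ⊗ sublattice ⊗ valley. -/
abbrev M8 := Matrix ((Fin 2 × Fin 2) × Fin 2) ((Fin 2 × Fin 2) × Fin 2) ℂ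

/-- A symmetry-allowed mass term for the `π`-flux Dirac Hamiltonian:
(a) it anticommutes with the Dirac kinetic matrices `σ₀⊗τ_y⊗μ₀` and
`σ₀⊗τ_z⊗μ_z` (so it gaps both Dirac cones);
(b) it commutes with `σ₀⊗τ₀⊗μ_z` and `σ₀⊗τ_y⊗μ_x` (magnetic translation
invariance under `R_{T̃y} = i μ_z`, `R_{T̃x} = i τ_y μ_x`);
(c) it is time-reversal invariant under `T = i σ_y μ_x K`:
`(σ_y⊗τ₀⊗μ_x) M̄ (σ_y⊗τ₀⊗μ_x) = M`. -/
def IsAllowedMass (M : M8) : Prop :=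
  (M * (pauli0 ⊗ₖ pauliY ⊗ₖ pauli0) = -((pauli0 ⊗ₖ pauliY ⊗ₖ pauli0) * M)) ∧
  (M * (pauli0 ⊗ₖ pauliZ ⊗ₖ pauliZ) = -((pauli0 ⊗ₖ pauliZ ⊗ₖ pauliZ) * M)) ∧
  (M * (pauli0 ⊗ₖ pauli0 ⊗ₖ pauliZ) = (pauli0 ⊗ₖ pauli0 ⊗ₖ pauliZ) * M) ∧
  (M * (pauli0 ⊗ₖ pauliY ⊗ₖ pauliX) = (pauli0 ⊗ₖ pauliY ⊗ₖ pauliX) * M) ∧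
  ((pauliY ⊗ₖ pauli0 ⊗ₖ pauliX) * M.map (starRingEnd ℂ) *
      (pauliY ⊗ₖ pauli0 ⊗ₖ pauliX) = M)

/-- The three quantum spin Hall mass matrices `σ_{x,y,z} ⊗ τ_x ⊗ μ_z`. -/
noncomputable def QSHmassX : M8 := pauliX ⊗ₖ pauliX ⊗ₖ pauliZ
noncomputable def QSHmassY : M8 := pauliY ⊗ₖ pauliX ⊗ₖ pauliZ
noncomputable def QSHmassZ : M8 := pauliZ ⊗ₖ pauliX ⊗ₖ pauliZ


section QSHaux

lemma p00 : pauli0 * pauli0 = pauli0 := by rw [pauli0, one_mul]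
lemma p0X : pauli0 * pauliX = pauliX := by rw [pauli0, one_mul]
lemma p0Y : pauli0 * pauliY = pauliY := by rw [pauli0, one_mul]
lemma p0Z : pauli0 * pauliZ = pauliZ := by rw [pauli0, one_mul]
lemma pX0 : pauliX * pauli0 = pauliX := by rw [pauli0, mul_one]
lemma pY0 : pauliY * pauli0 = pauliY := by rw [pauli0, mul_one]
lemma pZ0 : pauliZ * pauli0 = pauliZ := by rw [pauli0, mul_one]
lemma pXX : pauliX * pauliX = pauli0 := by
  ext i j; fin_cases i <;> fin_cases j <;> simp [pauli0, pauliX, Matrix.mul_apply, Fin.sum_univ_two, Matrix.one_apply]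
lemma pYY : pauliY * pauliY = pauli0 := by
  ext i j; fin_cases i <;> fin_cases j <;> simp [pauli0, pauliY, Matrix.mul_apply, Fin.sum_univ_two, Matrix.one_apply, Complex.I_mul_I]
lemma pZZ : pauliZ * pauliZ = pauli0 := by
  ext i j; fin_cases i <;> fin_cases j <;> simp [pauli0, pauliZ, Matrix.mul_apply, Fin.sum_univ_two, Matrix.one_apply]
lemma pXY : pauliX * pauliY = Complex.I • pauliZ := by
  ext i j; fin_cases i <;> fin_cases j <;> simp [pauliX, pauliY, pauliZ, Matrix.mul_apply, Fin.sum_univ_two]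
lemma pYX : pauliY * pauliX = (-Complex.I) • pauliZ := by
  ext i j; fin_cases i <;> fin_cases j <;> simp [pauliX, pauliY, pauliZ, Matrix.mul_apply, Fin.sum_univ_two]
lemma pYZ : pauliY * pauliZ = Complex.I • pauliX := by
  ext i j; fin_cases i <;> fin_cases j <;> simp [pauliX, pauliY, pauliZ, Matrix.mul_apply, Fin.sum_univ_two]
lemma pZY : pauliZ * pauliY = (-Complex.I) • pauliX := by
  ext i j; fin_cases i <;> fin_cases j <;> simp [pauliX, pauliY, pauliZ, Matrix.mul_apply, Fin.sum_univ_two]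
lemma pZX : pauliZ * pauliX = Complex.I • pauliY := by
  ext i j; fin_cases i <;> fin_cases j <;> simp [pauliX, pauliY, pauliZ, Matrix.mul_apply, Fin.sum_univ_two]
lemma pXZ : pauliX * pauliZ = (-Complex.I) • pauliY := by
  ext i j; fin_cases i <;> fin_cases j <;> simp [pauliX, pauliY, pauliZ, Matrix.mul_apply, Fin.sum_univ_two]

lemma kron_map {m n : Type*} (A : Matrix m m ℂ) (B : Matrix n n ℂ) :
    (A ⊗ₖ B).map (starRingEnd ℂ) = (A.map (starRingEnd ℂ)) ⊗ₖ (B.map (starRingEnd ℂ)) := by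
  ext ⟨a,b⟩ ⟨c,d⟩
  simp [Matrix.kroneckerMap_apply, Matrix.map_apply]

lemma kron_ct {m n : Type*} (A : Matrix m m ℂ) (B : Matrix n n ℂ) :
    (A ⊗ₖ B)ᴴ = Aᴴ ⊗ₖ Bᴴ := by
  ext ⟨a,b⟩ ⟨c,d⟩
  simp [Matrix.kroneckerMap_apply, Matrix.conjTranspose_apply, star_mul']

lemma neg_kron {m n : Type*} (A : Matrix m m ℂ) (B : Matrix n n ℂ) : (-A) ⊗ₖ B = -(A ⊗ₖ B) := by
  ext ⟨a,b⟩ ⟨c,d⟩; simp [Matrix.kroneckerMap_apply]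

lemma kron_neg {m n : Type*} (A : Matrix m m ℂ) (B : Matrix n n ℂ) : A ⊗ₖ (-B) = -(A ⊗ₖ B) := by
  ext ⟨a,b⟩ ⟨c,d⟩; simp [Matrix.kroneckerMap_apply]

lemma mapX : pauliX.map (starRingEnd ℂ) = pauliX := by
  ext i j; fin_cases i <;> fin_cases j <;> simp [pauliX]
lemma mapY : pauliY.map (starRingEnd ℂ) = (-1 : ℂ) • pauliY := by
  ext i j; fin_cases i <;> fin_cases j <;> simp [pauliY]
lemma mapZ : pauliZ.map (starRingEnd ℂ) = pauliZ := by
  ext i j; fin_cases i <;> fin_cases j <;> simp [pauliZ]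
lemma map0 : pauli0.map (starRingEnd ℂ) = pauli0 := by
  ext i j; fin_cases i <;> fin_cases j <;> simp [pauli0, Matrix.one_apply]
lemma ctX : pauliXᴴ = pauliX := by
  ext i j; fin_cases i <;> fin_cases j <;> simp [pauliX]
lemma ctY : pauliYᴴ = pauliY := by
  ext i j; fin_cases i <;> fin_cases j <;> simp [pauliY]
lemma ctZ : pauliZᴴ = pauliZ := by
  ext i j; fin_cases i <;> fin_cases j <;> simp [pauliZ]

end QSHaux

set_option maxHeartbeats 4000000 in
/-- The only mass terms for the `π`-flux Dirac Hamiltonian allowed by time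
reversal and magnetic translation symmetry are the three QSH masses
`σ⃗ τ_x μ_z`: every Hermitian allowed mass is a real linear combination of
`σ_x⊗τ_x⊗μ_z`, `σ_y⊗τ_x⊗μ_z`, `σ_z⊗τ_x⊗μ_z`, and conversely each of these
three matrices is Hermitian and is an allowed mass. -/
theorem qsh_mass_classification :
    (∀ M : M8, M.IsHermitian → IsAllowedMass M →
      ∃ a b c : ℝ,
        M = (a : ℂ) • QSHmassX + (b : ℂ) • QSHmassY + (c : ℂ) • QSHmassZ) ∧
    (QSHmassX.IsHermitian ∧ IsAllowedMass QSHmassX) ∧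
    (QSHmassY.IsHermitian ∧ IsAllowedMass QSHmassY) ∧
    (QSHmassZ.IsHermitian ∧ IsAllowedMass QSHmassZ) := by
  constructor
  · intro M hH hA
    obtain ⟨h1, h2, h3, h4, h5⟩ := hA
    have e1 := congrFun (congrFun h3 (((0,0),0))) (((0,0),1))
    have e2 := congrFun (congrFun h3 (((0,0),0))) (((0,1),1))
    have e3 := congrFun (congrFun h3 (((0,0),0))) (((1,0),1))
    have e4 := congrFun (congrFun h3 (((0,0),0))) (((1,1),1))
    have e5 := congrFun (congrFun h3 (((0,0),1))) (((0,0),0))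
    have e6 := congrFun (congrFun h3 (((0,0),1))) (((0,1),0))
    have e7 := congrFun (congrFun h3 (((0,0),1))) (((1,0),0))
    have e8 := congrFun (congrFun h3 (((0,0),1))) (((1,1),0))
    have e9 := congrFun (congrFun h3 (((0,1),0))) (((0,0),1))
    have e10 := congrFun (congrFun h3 (((0,1),0))) (((0,1),1))
    have e11 := congrFun (congrFun h3 (((0,1),0))) (((1,0),1))
    have e12 := congrFun (congrFun h3 (((0,1),0))) (((1,1),1))
    have e13 := congrFun (congrFun h3 (((0,1),1))) (((0,0),0))
    have e14 := congrFun (congrFun h3 (((0,1),1))) (((0,1),0))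
    have e15 := congrFun (congrFun h3 (((0,1),1))) (((1,0),0))
    have e16 := congrFun (congrFun h3 (((0,1),1))) (((1,1),0))
    have e17 := congrFun (congrFun h3 (((1,0),0))) (((0,0),1))
    have e18 := congrFun (congrFun h3 (((1,0),0))) (((0,1),1))
    have e19 := congrFun (congrFun h3 (((1,0),0))) (((1,0),1))
    have e20 := congrFun (congrFun h3 (((1,0),0))) (((1,1),1))
    have e21 := congrFun (congrFun h3 (((1,0),1))) (((0,0),0))
    have e22 := congrFun (congrFun h3 (((1,0),1))) (((0,1),0))
    have e23 := congrFun (congrFun h3 (((1,0),1))) (((1,0),0))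
    have e24 := congrFun (congrFun h3 (((1,0),1))) (((1,1),0))
    have e25 := congrFun (congrFun h3 (((1,1),0))) (((0,0),1))
    have e26 := congrFun (congrFun h3 (((1,1),0))) (((0,1),1))
    have e27 := congrFun (congrFun h3 (((1,1),0))) (((1,0),1))
    have e28 := congrFun (congrFun h3 (((1,1),0))) (((1,1),1))
    have e29 := congrFun (congrFun h3 (((1,1),1))) (((0,0),0))
    have e30 := congrFun (congrFun h3 (((1,1),1))) (((0,1),0))
    have e31 := congrFun (congrFun h3 (((1,1),1))) (((1,0),0))
    have e32 := congrFun (congrFun h3 (((1,1),1))) (((1,1),0))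
    have e33 := congrFun (congrFun h2 (((0,0),0))) (((0,0),0))
    have e34 := congrFun (congrFun h2 (((0,0),0))) (((1,0),0))
    have e35 := congrFun (congrFun h2 (((0,0),1))) (((0,0),1))
    have e36 := congrFun (congrFun h2 (((0,0),1))) (((1,0),1))
    have e37 := congrFun (congrFun h2 (((0,1),0))) (((0,1),0))
    have e38 := congrFun (congrFun h2 (((0,1),0))) (((1,1),0))
    have e39 := congrFun (congrFun h2 (((0,1),1))) (((0,1),1))
    have e40 := congrFun (congrFun h2 (((0,1),1))) (((1,1),1))
    have e41 := congrFun (congrFun h2 (((1,0),0))) (((0,0),0))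
    have e42 := congrFun (congrFun h2 (((1,0),0))) (((1,0),0))
    have e43 := congrFun (congrFun h2 (((1,0),1))) (((0,0),1))
    have e44 := congrFun (congrFun h2 (((1,0),1))) (((1,0),1))
    have e45 := congrFun (congrFun h2 (((1,1),0))) (((0,1),0))
    have e46 := congrFun (congrFun h2 (((1,1),0))) (((1,1),0))
    have e47 := congrFun (congrFun h2 (((1,1),1))) (((0,1),1))
    have e48 := congrFun (congrFun h2 (((1,1),1))) (((1,1),1))
    have e49 := congrFun (congrFun h1 (((0,0),0))) (((0,0),0))
    have e50 := congrFun (congrFun h4 (((0,0),1))) (((0,0),0))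
    have e51 := congrFun (congrFun h4 (((0,1),1))) (((0,1),0))
    have e52 := congrFun (congrFun h1 (((0,0),0))) (((1,0),0))
    have e53 := congrFun (congrFun h4 (((0,0),1))) (((1,0),0))
    have e54 := congrFun (congrFun h4 (((0,1),1))) (((1,1),0))
    have e55 := congrFun (congrFun h1 (((1,0),0))) (((0,0),0))
    have e56 := congrFun (congrFun h4 (((1,0),1))) (((0,0),0))
    have e57 := congrFun (congrFun h4 (((1,1),1))) (((0,1),0))
    have e58 := congrFun (congrFun h1 (((1,0),0))) (((1,0),0))
    have e59 := congrFun (congrFun h4 (((1,0),1))) (((1,0),0))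
    have e60 := congrFun (congrFun h4 (((1,1),1))) (((1,1),0))
    have e61 := congrFun (congrFun h5 ((0,0),0)) ((0,1),0)
    simp only [Matrix.mul_apply, Fintype.sum_prod_type, Fin.sum_univ_two, Matrix.kroneckerMap_apply, Matrix.neg_apply, Matrix.map_apply, pauli0, pauliX, pauliY, pauliZ, Matrix.one_apply, Matrix.of_apply, Matrix.cons_val', Matrix.cons_val_zero, Matrix.cons_val_one, Matrix.head_cons, Matrix.empty_val', Matrix.cons_val_fin_one, Fin.isValue, one_ne_zero, zero_ne_one, if_true, if_false, ite_true, ite_false, reduceIte, one_mul, mul_one, zero_mul, mul_zero, add_zero, zero_add, mul_neg, neg_mul, neg_neg, neg_zero, Matrix.vecHead, Matrix.vecTail] at e1 e2 e3 e4 e5 e6 e7 e8 e9 e10 e11 e12 e13 e14 e15 e16 e17 e18 e19 e20 e21 e22 e23 e24 e25 e26 e27 e28 e29 e30 e31 e32 e33 e34 e35 e36 e37 e38 e39 e40 e41 e42 e43 e44 e45 e46 e47 e48 e49 e50 e51 e52 e53 e54 e55 e56 e57 e58 e59 e60 e61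
    have f000001 : M (((0,0),0)) (((0,0),1)) = 0 := by linear_combination (-(1/2) : ℂ) * e1
    have f000011 : M (((0,0),0)) (((0,1),1)) = 0 := by linear_combination (-(1/2) : ℂ) * e2
    have f000101 : M (((0,0),0)) (((1,0),1)) = 0 := by linear_combination (-(1/2) : ℂ) * e3
    have f000111 : M (((0,0),0)) (((1,1),1)) = 0 := by linear_combination (-(1/2) : ℂ) * e4
    have f001000 : M (((0,0),1)) (((0,0),0)) = 0 := by linear_combination (1/2 : ℂ) * e5
    have f001010 : M (((0,0),1)) (((0,1),0)) = 0 := by linear_combination (1/2 : ℂ) * e6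
    have f001100 : M (((0,0),1)) (((1,0),0)) = 0 := by linear_combination (1/2 : ℂ) * e7
    have f001110 : M (((0,0),1)) (((1,1),0)) = 0 := by linear_combination (1/2 : ℂ) * e8
    have f010001 : M (((0,1),0)) (((0,0),1)) = 0 := by linear_combination (-(1/2) : ℂ) * e9
    have f010011 : M (((0,1),0)) (((0,1),1)) = 0 := by linear_combination (-(1/2) : ℂ) * e10
    have f010101 : M (((0,1),0)) (((1,0),1)) = 0 := by linear_combination (-(1/2) : ℂ) * e11
    have f010111 : M (((0,1),0)) (((1,1),1)) = 0 := by linear_combination (-(1/2) : ℂ) * e12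
    have f011000 : M (((0,1),1)) (((0,0),0)) = 0 := by linear_combination (1/2 : ℂ) * e13
    have f011010 : M (((0,1),1)) (((0,1),0)) = 0 := by linear_combination (1/2 : ℂ) * e14
    have f011100 : M (((0,1),1)) (((1,0),0)) = 0 := by linear_combination (1/2 : ℂ) * e15
    have f011110 : M (((0,1),1)) (((1,1),0)) = 0 := by linear_combination (1/2 : ℂ) * e16
    have f100001 : M (((1,0),0)) (((0,0),1)) = 0 := by linear_combination (-(1/2) : ℂ) * e17
    have f100011 : M (((1,0),0)) (((0,1),1)) = 0 := by linear_combination (-(1/2) : ℂ) * e18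
    have f100101 : M (((1,0),0)) (((1,0),1)) = 0 := by linear_combination (-(1/2) : ℂ) * e19
    have f100111 : M (((1,0),0)) (((1,1),1)) = 0 := by linear_combination (-(1/2) : ℂ) * e20
    have f101000 : M (((1,0),1)) (((0,0),0)) = 0 := by linear_combination (1/2 : ℂ) * e21
    have f101010 : M (((1,0),1)) (((0,1),0)) = 0 := by linear_combination (1/2 : ℂ) * e22
    have f101100 : M (((1,0),1)) (((1,0),0)) = 0 := by linear_combination (1/2 : ℂ) * e23
    have f101110 : M (((1,0),1)) (((1,1),0)) = 0 := by linear_combination (1/2 : ℂ) * e24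
    have f110001 : M (((1,1),0)) (((0,0),1)) = 0 := by linear_combination (-(1/2) : ℂ) * e25
    have f110011 : M (((1,1),0)) (((0,1),1)) = 0 := by linear_combination (-(1/2) : ℂ) * e26
    have f110101 : M (((1,1),0)) (((1,0),1)) = 0 := by linear_combination (-(1/2) : ℂ) * e27
    have f110111 : M (((1,1),0)) (((1,1),1)) = 0 := by linear_combination (-(1/2) : ℂ) * e28
    have f111000 : M (((1,1),1)) (((0,0),0)) = 0 := by linear_combination (1/2 : ℂ) * e29
    have f111010 : M (((1,1),1)) (((0,1),0)) = 0 := by linear_combination (1/2 : ℂ) * e30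
    have f111100 : M (((1,1),1)) (((1,0),0)) = 0 := by linear_combination (1/2 : ℂ) * e31
    have f111110 : M (((1,1),1)) (((1,1),0)) = 0 := by linear_combination (1/2 : ℂ) * e32
    have f000000 : M (((0,0),0)) (((0,0),0)) = 0 := by linear_combination (1/2 : ℂ) * e33
    have f000100 : M (((0,0),0)) (((1,0),0)) = 0 := by linear_combination (1/2 : ℂ) * e34
    have f001001 : M (((0,0),1)) (((0,0),1)) = 0 := by linear_combination (-(1/2) : ℂ) * e35
    have f001101 : M (((0,0),1)) (((1,0),1)) = 0 := by linear_combination (-(1/2) : ℂ) * e36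
    have f010010 : M (((0,1),0)) (((0,1),0)) = 0 := by linear_combination (-(1/2) : ℂ) * e37
    have f010110 : M (((0,1),0)) (((1,1),0)) = 0 := by linear_combination (-(1/2) : ℂ) * e38
    have f011011 : M (((0,1),1)) (((0,1),1)) = 0 := by linear_combination (1/2 : ℂ) * e39
    have f011111 : M (((0,1),1)) (((1,1),1)) = 0 := by linear_combination (1/2 : ℂ) * e40
    have f100000 : M (((1,0),0)) (((0,0),0)) = 0 := by linear_combination (1/2 : ℂ) * e41
    have f100100 : M (((1,0),0)) (((1,0),0)) = 0 := by linear_combination (1/2 : ℂ) * e42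
    have f101001 : M (((1,0),1)) (((0,0),1)) = 0 := by linear_combination (-(1/2) : ℂ) * e43
    have f101101 : M (((1,0),1)) (((1,0),1)) = 0 := by linear_combination (-(1/2) : ℂ) * e44
    have f110010 : M (((1,1),0)) (((0,1),0)) = 0 := by linear_combination (-(1/2) : ℂ) * e45
    have f110110 : M (((1,1),0)) (((1,1),0)) = 0 := by linear_combination (-(1/2) : ℂ) * e46
    have f111011 : M (((1,1),1)) (((0,1),1)) = 0 := by linear_combination (1/2 : ℂ) * e47
    have f111111 : M (((1,1),1)) (((1,1),1)) = 0 := by linear_combination (1/2 : ℂ) * e48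
    have fB00 : M (((0,1),0)) (((0,0),0)) = M (((0,0),0)) (((0,1),0)) := by linear_combination Complex.I * e49 + (M (((0,1),0)) (((0,0),0)) - (M (((0,0),0)) (((0,1),0)))) * Complex.I_mul_I
    have fC00 : M (((0,0),1)) (((0,1),1)) = -(M (((0,0),0)) (((0,1),0))) := by linear_combination (-Complex.I) * e50 + (-1 : ℂ) * fB00 + (M (((0,0),1)) (((0,1),1)) + M (((0,1),0)) (((0,0),0))) * Complex.I_mul_I
    have fD00 : M (((0,1),1)) (((0,0),1)) = -(M (((0,0),0)) (((0,1),0))) := by linear_combination Complex.I * e51 + (M (((0,1),1)) (((0,0),1)) + M (((0,0),0)) (((0,1),0))) * Complex.I_mul_I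
    have fB01 : M (((0,1),0)) (((1,0),0)) = M (((0,0),0)) (((1,1),0)) := by linear_combination Complex.I * e52 + (M (((0,1),0)) (((1,0),0)) - (M (((0,0),0)) (((1,1),0)))) * Complex.I_mul_I
    have fC01 : M (((0,0),1)) (((1,1),1)) = -(M (((0,0),0)) (((1,1),0))) := by linear_combination (-Complex.I) * e53 + (-1 : ℂ) * fB01 + (M (((0,0),1)) (((1,1),1)) + M (((0,1),0)) (((1,0),0))) * Complex.I_mul_I
    have fD01 : M (((0,1),1)) (((1,0),1)) = -(M (((0,0),0)) (((1,1),0))) := by linear_combination Complex.I * e54 + (M (((0,1),1)) (((1,0),1)) + M (((0,0),0)) (((1,1),0))) * Complex.I_mul_I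
    have fB10 : M (((1,1),0)) (((0,0),0)) = M (((1,0),0)) (((0,1),0)) := by linear_combination Complex.I * e55 + (M (((1,1),0)) (((0,0),0)) - (M (((1,0),0)) (((0,1),0)))) * Complex.I_mul_I
    have fC10 : M (((1,0),1)) (((0,1),1)) = -(M (((1,0),0)) (((0,1),0))) := by linear_combination (-Complex.I) * e56 + (-1 : ℂ) * fB10 + (M (((1,0),1)) (((0,1),1)) + M (((1,1),0)) (((0,0),0))) * Complex.I_mul_I
    have fD10 : M (((1,1),1)) (((0,0),1)) = -(M (((1,0),0)) (((0,1),0))) := by linear_combination Complex.I * e57 + (M (((1,1),1)) (((0,0),1)) + M (((1,0),0)) (((0,1),0))) * Complex.I_mul_I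
    have fB11 : M (((1,1),0)) (((1,0),0)) = M (((1,0),0)) (((1,1),0)) := by linear_combination Complex.I * e58 + (M (((1,1),0)) (((1,0),0)) - (M (((1,0),0)) (((1,1),0)))) * Complex.I_mul_I
    have fC11 : M (((1,0),1)) (((1,1),1)) = -(M (((1,0),0)) (((1,1),0))) := by linear_combination (-Complex.I) * e59 + (-1 : ℂ) * fB11 + (M (((1,0),1)) (((1,1),1)) + M (((1,1),0)) (((1,0),0))) * Complex.I_mul_I
    have fD11 : M (((1,1),1)) (((1,0),1)) = -(M (((1,0),0)) (((1,1),0))) := by linear_combination Complex.I * e60 + (M (((1,1),1)) (((1,0),1)) + M (((1,0),0)) (((1,1),0))) * Complex.I_mul_I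
    have eh1 := congrFun (congrFun hH.eq (((0,0),0) : (Fin 2 × Fin 2) × Fin 2)) ((0,1),0)
    have eh2 := congrFun (congrFun hH.eq (((0,0),0) : (Fin 2 × Fin 2) × Fin 2)) ((1,1),0)
    have eh3 := congrFun (congrFun hH.eq (((1,0),0) : (Fin 2 × Fin 2) × Fin 2)) ((1,1),0)
    simp only [Matrix.conjTranspose_apply, Complex.star_def] at eh1 eh2 eh3
    rw [fB00] at eh1
    rw [fB10] at eh2
    rw [fB11] at eh3
    have vp : M ((0,0),0) ((0,1),0) = ((M ((0,0),0) ((0,1),0)).re : ℂ) := (Complex.conj_eq_iff_re.mp eh1).symm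
    have vq : M ((0,0),0) ((1,1),0) = ((M ((0,0),0) ((1,1),0)).re : ℂ) - ((-(M ((0,0),0) ((1,1),0)).im : ℝ) : ℂ) * Complex.I := by
      push_cast
      linear_combination - Complex.re_add_im (M ((0,0),0) ((1,1),0))
    have hr : M ((1,0),0) ((0,1),0) = (starRingEnd ℂ) (M ((0,0),0) ((1,1),0)) := by rw [← eh2, starRingEnd_self_apply]
    have vr : M ((1,0),0) ((0,1),0) = ((M ((0,0),0) ((1,1),0)).re : ℂ) + ((-(M ((0,0),0) ((1,1),0)).im : ℝ) : ℂ) * Complex.I := by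
      rw [hr]; push_cast; simp [Complex.ext_iff]
    rw [fC11, map_neg, eh3] at e61
    have vu : M ((1,0),0) ((1,1),0) = -((M ((0,0),0) ((0,1),0)).re : ℂ) := by
      linear_combination (-1 : ℂ) * e61 + (M ((1,0),0) ((1,1),0)) * Complex.I_mul_I - vp
    refine ⟨(M ((0,0),0) ((1,1),0)).re, -(M ((0,0),0) ((1,1),0)).im, (M ((0,0),0) ((0,1),0)).re, ?_⟩
    have htwo : ∀ x : Fin 2, x = 0 ∨ x = 1 := by decide
    ext ⟨⟨s,t⟩,m⟩ ⟨⟨s',t'⟩,m'⟩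
    rcases htwo s with rfl | rfl <;> rcases htwo t with rfl | rfl <;> rcases htwo m with rfl | rfl <;> rcases htwo s' with rfl | rfl <;> rcases htwo t' with rfl | rfl <;> rcases htwo m' with rfl | rfl
    all_goals simp only [Matrix.add_apply, Matrix.smul_apply, QSHmassX, QSHmassY, QSHmassZ, Matrix.kroneckerMap_apply, pauli0, pauliX, pauliY, pauliZ, Matrix.one_apply, Matrix.of_apply, Matrix.cons_val', Matrix.cons_val_zero, Matrix.cons_val_one, Matrix.head_cons, Matrix.empty_val', Matrix.cons_val_fin_one, Fin.isValue, one_ne_zero, zero_ne_one, reduceIte, smul_eq_mul, one_mul, mul_one, zero_mul, mul_zero, add_zero, zero_add, mul_neg, neg_mul, neg_zero, Matrix.vecHead, Matrix.vecTail]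
    · linear_combination f000000
    · linear_combination f000001
    · linear_combination vp
    · linear_combination f000011
    · linear_combination f000100
    · linear_combination f000101
    · linear_combination vq
    · linear_combination f000111
    · linear_combination f001000
    · linear_combination f001001
    · linear_combination f001010
    · linear_combination fC00 + (-1 : ℂ) * vp
    · linear_combination f001100
    · linear_combination f001101
    · linear_combination f001110
    · linear_combination fC01 + (-1 : ℂ) * vq
    · linear_combination fB00 + vp
    · linear_combination f010001
    · linear_combination f010010
    · linear_combination f010011
    · linear_combination fB01 + vq
    · linear_combination f010101
    · linear_combination f010110
    · linear_combination f010111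
    · linear_combination f011000
    · linear_combination fD00 + (-1 : ℂ) * vp
    · linear_combination f011010
    · linear_combination f011011
    · linear_combination f011100
    · linear_combination fD01 + (-1 : ℂ) * vq
    · linear_combination f011110
    · linear_combination f011111
    · linear_combination f100000
    · linear_combination f100001
    · linear_combination vr
    · linear_combination f100011
    · linear_combination f100100
    · linear_combination f100101
    · linear_combination vu
    · linear_combination f100111
    · linear_combination f101000
    · linear_combination f101001
    · linear_combination f101010
    · linear_combination fC10 + (-1 : ℂ) * vr
    · linear_combination f101100
    · linear_combination f101101
    · linear_combination f101110
    · linear_combination fC11 + (-1 : ℂ) * vu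
    · linear_combination fB10 + vr
    · linear_combination f110001
    · linear_combination f110010
    · linear_combination f110011
    · linear_combination fB11 + vu
    · linear_combination f110101
    · linear_combination f110110
    · linear_combination f110111
    · linear_combination f111000
    · linear_combination fD10 + (-1 : ℂ) * vr
    · linear_combination f111010
    · linear_combination f111011
    · linear_combination f111100
    · linear_combination fD11 + (-1 : ℂ) * vu
    · linear_combination f111110
    · linear_combination f111111

  · refine ⟨?_, ?_, ?_⟩
    · constructor
      · show _ = _
        simp only [QSHmassX, kron_ct, ctX, ctY, ctZ]
      · unfold IsAllowedMass
        refine ⟨?_, ?_, ?_, ?_, ?_⟩ <;>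
          simp only [QSHmassX, QSHmassY, QSHmassZ, kron_map, mapX, mapY, mapZ, map0, ← Matrix.mul_kronecker_mul, pXX, pYY, pZZ, pXY, pYX, pYZ, pZY, pZX, pXZ, p00, p0X, p0Y, p0Z, pX0, pY0, pZ0, neg_smul, neg_kron, kron_neg, Matrix.smul_kronecker, Matrix.kronecker_smul, Matrix.neg_mul, Matrix.mul_neg, Matrix.smul_mul, Matrix.mul_smul, smul_smul, neg_neg, one_smul, Complex.I_mul_I, neg_mul_neg, mul_neg, neg_mul, smul_neg, neg_one_smul]
    · constructor
      · show _ = _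
        simp only [QSHmassY, kron_ct, ctX, ctY, ctZ]
      · unfold IsAllowedMass
        refine ⟨?_, ?_, ?_, ?_, ?_⟩ <;>
          simp only [QSHmassX, QSHmassY, QSHmassZ, kron_map, mapX, mapY, mapZ, map0, ← Matrix.mul_kronecker_mul, pXX, pYY, pZZ, pXY, pYX, pYZ, pZY, pZX, pXZ, p00, p0X, p0Y, p0Z, pX0, pY0, pZ0, neg_smul, neg_kron, kron_neg, Matrix.smul_kronecker, Matrix.kronecker_smul, Matrix.neg_mul, Matrix.mul_neg, Matrix.smul_mul, Matrix.mul_smul, smul_smul, neg_neg, one_smul, Complex.I_mul_I, neg_mul_neg, mul_neg, neg_mul, smul_neg, neg_one_smul]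
    · constructor
      · show _ = _
        simp only [QSHmassZ, kron_ct, ctX, ctY, ctZ]
      · unfold IsAllowedMass
        refine ⟨?_, ?_, ?_, ?_, ?_⟩ <;>
          simp only [QSHmassX, QSHmassY, QSHmassZ, kron_map, mapX, mapY, mapZ, map0, ← Matrix.mul_kronecker_mul, pXX, pYY, pZZ, pXY, pYX, pYZ, pZY, pZX, pXZ, p00, p0X, p0Y, p0Z, pX0, pY0, pZ0, neg_smul, neg_kron, kron_neg, Matrix.smul_kronecker, Matrix.kronecker_smul, Matrix.neg_mul, Matrix.mul_neg, Matrix.smul_mul, Matrix.mul_smul, smul_smul, neg_neg, one_smul, Complex.I_mul_I, neg_mul_neg, mul_neg, neg_mul, smul_neg, neg_one_smul]
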